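/- Let n ∈ ℕ and A be a commutative ring. If A is α-Noetherian for some ordinal α < ω^n, then the Krull dimension of A is less than n, in the sense that for all x_0,...,x_{n-1} ∈ A there exist e_0,...,e_{n-1} ≥ 0 such that x_0^{e_0}···x_{n-1}^{e_{n-1}} ∈ ⟨x_0^{e_0+1}, x_0^{e_0}x_1^{e_1+1}, ..., x_0^{e_0}···x_{n-2}^{e_{n-2}}x_{n-1}^{e_{n-1}+1}⟩. -/

import Mathlib

open Ordinal

/-- A list is good ((-1)-good) if it is nonempty and its last entry lies in the
submodule generated by the preceding entries. -/
def GoodList (A : Type*) {M : Type*} [Ring A] [AddCommGroup M] [Module A M]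
    (σ : List M) : Prop :=
  ∃ (l : List M) (x : M), σ = l ++ [x] ∧ x ∈ Submodule.span A {y | y ∈ l}

/-- A list `σ` is `α`-good if for every `x`, the appended list `σ.x` is either good
((-1)-good) or `β`-good for some ordinal `β < α`.  A module `M` is `α`-Noetherian
if the empty list `[] : List M` is `α`-good; a ring is `α`-Noetherian if it is
`α`-Noetherian as a left module over itself. -/
def AlphaGood (A : Type*) {M : Type*} [Ring A] [AddCommGroup M] [Module A M]
    (α : Ordinal) (σ : List M) : Prop :=
  ∀ x : M, GoodList A (σ ++ [x]) ∨ ∃ (β : Ordinal) (_ : β < α), AlphaGood A β (σ ++ [x])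
termination_by α
/-- Lombardi's elementary characterization of `Kdim A < n`. -/
def KdimLt (A : Type*) [CommRing A] (n : ℕ) : Prop :=
  ∀ x : Fin n → A, ∃ e : Fin n → ℕ,
    (∏ i, x i ^ e i) ∈ Ideal.span (Set.range fun i : Fin n =>
      (∏ j ∈ Finset.univ.filter (fun j => j < i), x j ^ e j) * x i ^ (e i + 1))

/-!
Induction on `n`, for a statement relative to a list `σ` and a multiplier `m`: if `σ` is
`(γ + ρ)`-good with `ρ < ω ^ n`, then either `m x₀^{e₀}⋯x_{n-1}^{e_{n-1}}` lies in
`⟨σ⟩ + m ⟨x₀^{e₀+1}, …⟩` for some `e`, or `σ` extended by multiples of `m` is `β`-good for some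
`β < γ`. For `n = 0` this is one step of the definition of goodness, applied to `m`.
For `n + 1`, write `ρ < ω ^ n * (c + 1)` and spend the top block of size `ω ^ n` running the
`n`-variable statement on `x₁, …, x_n` with multiplier `x₀^c m`. If it escapes, the ordinal has
dropped either below `γ`, which is an escape for `m` too, or into the lower blocks, where
induction on `c` gives a witness with `e₀ < c`; the entries appended meanwhile are multiples of
`x₀^c m`, hence of `x₀^{e₀+1} m`.
-/

section Module

variable {R M : Type*} [Ring R] [AddCommGroup M] [Module R M]

theorem goodList_append_singleton_iff {σ : List M} {x : M} :
    GoodList R (σ ++ [x]) ↔ x ∈ Submodule.span R {y | y ∈ σ} := by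
  refine ⟨fun ⟨l, y, h, hy⟩ => ?_, fun h => ⟨σ, x, rfl, h⟩⟩
  obtain ⟨rfl, hxy⟩ := List.append_inj' h rfl
  rwa [List.singleton_inj.1 hxy]

theorem AlphaGood.mono {α α' : Ordinal} (hα : α ≤ α') {σ : List M} (h : AlphaGood R α σ) :
    AlphaGood R α' σ := by
  rw [AlphaGood] at h ⊢
  exact fun x => (h x).imp_right fun ⟨β, hβ, hg⟩ => ⟨β, hβ.trans_le hα, hg⟩

end Module

section Ring

universe u

variable {A : Type*} [CommRing A] {n : ℕ}

def lombardiGen (x : Fin n → A) (e : Fin n → ℕ) (i : Fin n) : A :=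
  (∏ j ∈ Finset.univ.filter (· < i), x j ^ e j) * x i ^ (e i + 1)

theorem lombardiGen_zero (x : Fin (n + 1) → A) (e : Fin (n + 1) → ℕ) :
    lombardiGen x e 0 = x 0 ^ (e 0 + 1) := by
  simp [lombardiGen]

theorem lombardiGen_cons_succ (x : Fin (n + 1) → A) (c : ℕ) (e : Fin n → ℕ) (i : Fin n) :
    lombardiGen x (Fin.cons c e) i.succ = x 0 ^ c * lombardiGen (Fin.tail x) e i := by
  simp only [lombardiGen, Finset.prod_filter, Fin.prod_univ_succ, Fin.cons_zero, Fin.cons_succ,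
    Fin.succ_pos, if_true, Fin.succ_lt_succ_iff, Fin.tail]
  ring

def IsSingular (I : Ideal A) (m : A) (x : Fin n → A) (e : Fin n → ℕ) : Prop :=
  (∏ i, x i ^ e i) * m ∈ I ⊔ Ideal.span (Set.range fun i => lombardiGen x e i * m)

theorem kdimLt_iff : KdimLt A n ↔ ∀ x : Fin n → A, ∃ e, IsSingular ⊥ 1 x e := by
  simp only [KdimLt, IsSingular, lombardiGen, mul_one, bot_sup_eq]

theorem isSingular_fin_zero_iff {I : Ideal A} {m : A} {x : Fin 0 → A} {e : Fin 0 → ℕ} :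
    IsSingular I m x e ↔ m ∈ I := by
  simp [IsSingular]

theorem IsSingular.cons {I : Ideal A} {m : A} {x : Fin (n + 1) → A} {c : ℕ} {e : Fin n → ℕ}
    (h : IsSingular I (x 0 ^ c * m) (Fin.tail x) e) : IsSingular I m x (Fin.cons c e) := by
  have hprod : (∏ i, x i ^ (Fin.cons c e : Fin (n + 1) → ℕ) i) * m
      = (∏ i, Fin.tail x i ^ e i) * (x 0 ^ c * m) := by
    rw [Fin.prod_univ_succ]
    simp only [Fin.cons_zero, Fin.cons_succ, Fin.tail]
    ring
  rw [IsSingular, hprod]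
  refine sup_le_sup_left (Ideal.span_le.2 ?_) I h
  rintro _ ⟨i, rfl⟩
  exact Ideal.subset_span ⟨i.succ, by simp only [lombardiGen_cons_succ]; ring⟩

/-- Entries divisible by `x 0 ^ (e 0 + 1) * m` are already multiples of the first generator. -/
theorem IsSingular.of_span_append {σ τ : List A} {m : A} {x : Fin (n + 1) → A}
    {e : Fin (n + 1) → ℕ} (hτ : ∀ z ∈ τ, x 0 ^ (e 0 + 1) * m ∣ z)
    (h : IsSingular (Ideal.span {y | y ∈ σ ++ τ}) m x e) :
    IsSingular (Ideal.span {y | y ∈ σ}) m x e := by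
  have hτ_le : Ideal.span {y | y ∈ τ} ≤ Ideal.span (Set.range fun i => lombardiGen x e i * m) := by
    refine Ideal.span_le.2 fun z hz => ?_
    obtain ⟨k, rfl⟩ := hτ z hz
    exact Ideal.mul_mem_right k _ (Ideal.subset_span ⟨0, by simp only [lombardiGen_zero]⟩)
  have hspan : Ideal.span {y | y ∈ σ ++ τ} = Ideal.span {y | y ∈ σ} ⊔ Ideal.span {y | y ∈ τ} := by
    rw [← Ideal.span_union]
    congr 1
    ext y
    simp
  rw [IsSingular, hspan, sup_assoc, sup_eq_right.2 hτ_le] at h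
  exact h

def Escapes (γ : Ordinal) (σ : List A) (m : A) : Prop :=
  ∃ τ : List A, (∀ z ∈ τ, m ∣ z) ∧ ∃ β < γ, AlphaGood A β (σ ++ τ)

theorem Escapes.of_append {γ : Ordinal} {σ τ : List A} {m : A} (hτ : ∀ z ∈ τ, m ∣ z)
    (h : Escapes γ (σ ++ τ) m) : Escapes γ σ m := by
  obtain ⟨τ', hτ', hβ⟩ := h
  refine ⟨τ ++ τ', fun z hz => ?_, by rwa [← List.append_assoc]⟩
  rcases List.mem_append.1 hz with hz | hz
  exacts [hτ z hz, hτ' z hz]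

theorem not_escapes_zero {σ : List A} {m : A} : ¬ Escapes 0 σ m := by
  rintro ⟨_, _, β, hβ, _⟩
  exact zero_le.not_gt hβ

def SingularOrEscapes (A : Type*) [CommRing A] (n : ℕ) : Prop :=
  ∀ ρ < (ω ^ (n : Ordinal) : Ordinal.{u}), ∀ (γ : Ordinal.{u}) (σ : List A),
    AlphaGood A (γ + ρ) σ →
    ∀ (m : A) (x : Fin n → A), (∃ e, IsSingular (Ideal.span {y | y ∈ σ}) m x e) ∨ Escapes γ σ m

theorem singularOrEscapes_zero : SingularOrEscapes A 0 := by
  intro ρ hρ γ σ hσ m x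
  rw [Nat.cast_zero, opow_zero, Order.lt_one_iff] at hρ
  rw [hρ, add_zero, AlphaGood] at hσ
  rcases hσ m with hgood | ⟨β, hβ, hβσ⟩
  · exact Or.inl ⟨Fin.elim0, isSingular_fin_zero_iff.2 (goodList_append_singleton_iff.1 hgood)⟩
  · exact Or.inr ⟨[m], by simp, β, hβ, hβσ⟩

theorem SingularOrEscapes.cons (IH : SingularOrEscapes.{u} A n) {ρ γ : Ordinal.{u}}
    (hρ : ρ < ω ^ (n : Ordinal)) {σ : List A} (hσ : AlphaGood A (γ + ρ) σ) (c : ℕ) (m : A)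
    (x : Fin (n + 1) → A) :
    (∃ e, e 0 = c ∧ IsSingular (Ideal.span {y | y ∈ σ}) m x e) ∨ Escapes γ σ (x 0 ^ c * m) :=
  (IH ρ hρ γ σ hσ (x 0 ^ c * m) (Fin.tail x)).imp_left
    fun ⟨e, he⟩ => ⟨Fin.cons c e, Fin.cons_zero _ _, he.cons⟩

theorem SingularOrEscapes.succ_of_lt_mul (IH : SingularOrEscapes.{u} A n) (c : ℕ)
    {ρ γ : Ordinal.{u}} (hρ : ρ < ω ^ (n : Ordinal) * c) {σ : List A} (hσ : AlphaGood A (γ + ρ) σ)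
    (m : A) (x : Fin (n + 1) → A) :
    (∃ e, e 0 < c ∧ IsSingular (Ideal.span {y | y ∈ σ}) m x e) ∨ Escapes γ σ m := by
  induction c generalizing ρ σ with
  | zero => simp at hρ
  | succ c ih =>
    set C := ω ^ (n : Ordinal) * c
    have hρC : ρ - C < ω ^ (n : Ordinal) := by
      refine Ordinal.sub_lt_of_lt_add ?_ (opow_pos _ omega0_pos)
      rwa [Nat.cast_succ, mul_add_one] at hρ
    have hσC : AlphaGood A ((γ + C) + (ρ - C)) σ :=
      hσ.mono (by rw [add_assoc]; gcongr; exact Ordinal.le_add_sub ρ C)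
    rcases IH.cons hρC hσC c m x with ⟨e, he0, he⟩ | ⟨τ, hτ, β, hβ, hβσ⟩
    · exact Or.inl ⟨e, he0 ▸ Nat.lt_succ_self _, he⟩
    have hmτ : ∀ z ∈ τ, m ∣ z := fun z hz => (dvd_mul_left m _).trans (hτ z hz)
    rcases lt_or_ge β γ with hβγ | hγβ
    · exact Or.inr ⟨τ, hmτ, β, hβγ, hβσ⟩
    have hδ : β - γ < C := by
      rwa [Ordinal.sub_lt_of_le hγβ]
    rw [← Ordinal.add_sub_cancel_of_le hγβ] at hβσ
    rcases ih hδ hβσ with ⟨e, he0, he⟩ | hesc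
    · refine Or.inl ⟨e, he0.trans (Nat.lt_succ_self _), he.of_span_append fun z hz => ?_⟩
      exact (mul_dvd_mul_right (pow_dvd_pow _ he0) m).trans (hτ z hz)
    · exact Or.inr (hesc.of_append hmτ)

theorem SingularOrEscapes.succ (IH : SingularOrEscapes.{u} A n) :
    SingularOrEscapes.{u} A (n + 1) := by
  intro ρ hρ γ σ hσ m x
  rw [Nat.cast_succ, ← Order.succ_eq_add_one, lt_omega0_opow_succ] at hρ
  obtain ⟨c, hc⟩ := hρ
  exact (IH.succ_of_lt_mul c hc hσ m x).imp_left fun ⟨e, _, he⟩ => ⟨e, he⟩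

theorem singularOrEscapes (n : ℕ) : SingularOrEscapes A n := by
  induction n with
  | zero => exact singularOrEscapes_zero
  | succ n IH => exact IH.succ

end Ring

/-- If a commutative ring `A` is `α`-Noetherian for some `α < ω ^ n`, then
`Kdim A < n` in the sense of Lombardi. -/
theorem kdim_lt_of_alphaNoetherian (n : ℕ) (A : Type*) [CommRing A]
    (h : ∃ α < Ordinal.omega0 ^ (n : Ordinal), AlphaGood A α ([] : List A)) :
    KdimLt A n := by
  obtain ⟨α, hα, hg⟩ := h
  refine kdimLt_iff.2 fun x => ?_
  rcases singularOrEscapes n α hα 0 [] (by rwa [zero_add]) 1 x with ⟨e, he⟩ | hesc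
  · exact ⟨e, by simpa using he⟩
  · exact absurd hesc not_escapes_zero
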